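/- arXiv:1203.5930 — 3 statements merged into one kernel-verified Lean document; each statement's English description precedes it below -/
import Mathlib

section
/- Let (π_n) be a sequence of Borel probability measures on ]0,+∞[ such that π_n converges narrowly to π, sup_n ∫(1/τ)π_n(dτ) < +∞, and the normalized measures π̃_n(dτ) := (1/τ)π_n(dτ)/∫(1/s)π_n(ds) form a tight family in P(]0,+∞]) with limit concentrated on ]0,+∞[. Then ∫(1/τ)π_n(dτ) → ∫(1/τ)π(dτ) < +∞. -/
/-!
Truncating `1/τ` to `(max τ δ)⁻¹` gives a bounded continuous function, so its
integrals converge under narrow convergence. Truncation only lowers the integrand, and by monotone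
convergence in `δ` this gives `∫(1/τ)dπ ≤ liminf ∫(1/τ)dπ_n ≤ C`. Conversely the truncation loses
at most the `(1/τ)π_n`-mass of `]0,δ[`, which tightness makes `≤ ε ∫(1/τ)dπ_n ≤ ε C` uniformly
in `n`, so `limsup ∫(1/τ)dπ_n ≤ ∫(1/τ)dπ + ε C` for every `ε > 0`.
-/

open MeasureTheory Filter Set BoundedContinuousFunction
open scoped ENNReal Topology

noncomputable def truncInv (δ : ℝ) (hδ : 0 < δ) : ℝ →ᵇ ℝ :=
  ofNormedAddCommGroup (fun x => (max x δ)⁻¹)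
    ((continuous_id.max continuous_const).inv₀ fun x => (hδ.trans_le (le_max_right x δ)).ne')
    δ⁻¹ (fun x => by
      rw [norm_inv, Real.norm_of_nonneg (hδ.le.trans (le_max_right x δ))]
      exact inv_anti₀ hδ (le_max_right x δ))

lemma lintegral_ofReal_inv_max_eq {μ : Measure ℝ} [IsFiniteMeasure μ] {δ : ℝ} (hδ : 0 < δ) :
    ∫⁻ x, ENNReal.ofReal (max x δ)⁻¹ ∂μ = ENNReal.ofReal (∫ x, truncInv δ hδ x ∂μ) :=
  (ofReal_integral_eq_lintegral_ofReal ((truncInv δ hδ).integrable μ)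
    (ae_of_all _ fun x => show 0 ≤ (max x δ)⁻¹ from
      inv_nonneg.2 (hδ.le.trans (le_max_right x δ)))).symm

lemma tendsto_lintegral_ofReal_inv_max {π : ℕ → Measure ℝ} {πlim : Measure ℝ}
    [∀ n, IsFiniteMeasure (π n)] [IsFiniteMeasure πlim]
    (hnarrow : ∀ f : ℝ →ᵇ ℝ, Tendsto (fun n => ∫ x, f x ∂π n) atTop (𝓝 (∫ x, f x ∂πlim)))
    {δ : ℝ} (hδ : 0 < δ) :
    Tendsto (fun n => ∫⁻ x, ENNReal.ofReal (max x δ)⁻¹ ∂π n) atTop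
      (𝓝 (∫⁻ x, ENNReal.ofReal (max x δ)⁻¹ ∂πlim)) := by
  simp only [lintegral_ofReal_inv_max_eq hδ]
  exact (ENNReal.continuous_ofReal.tendsto _).comp (hnarrow (truncInv δ hδ))

section Truncation

variable {μ : Measure ℝ}

lemma lintegral_ofReal_inv_max_le (hμ : ∀ᵐ x ∂μ, 0 < x) (δ : ℝ) :
    ∫⁻ x, ENNReal.ofReal (max x δ)⁻¹ ∂μ ≤ ∫⁻ x, ENNReal.ofReal (1 / x) ∂μ := by
  refine lintegral_mono_ae (hμ.mono fun x hx => ENNReal.ofReal_le_ofReal ?_)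
  rw [one_div]
  exact inv_anti₀ hx (le_max_left x δ)

lemma lintegral_ofReal_inv_le_add_withDensity_Ioo (δ : ℝ) :
    ∫⁻ x, ENNReal.ofReal (1 / x) ∂μ ≤ ∫⁻ x, ENNReal.ofReal (max x δ)⁻¹ ∂μ
      + μ.withDensity (fun τ => ENNReal.ofReal (1 / τ)) (Ioo 0 δ) := by
  rw [withDensity_apply _ measurableSet_Ioo, ← lintegral_indicator measurableSet_Ioo,
    ← lintegral_add_left (by fun_prop)]
  refine lintegral_mono fun x => ?_
  by_cases hx : x ∈ Ioo 0 δ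
  · rw [indicator_of_mem hx]
    exact le_add_self
  · rw [indicator_of_notMem hx, add_zero]
    rcases le_or_gt x 0 with hx0 | hx0
    · rw [ENNReal.ofReal_of_nonpos (one_div_nonpos.2 hx0)]
      exact zero_le
    · rw [max_eq_left (not_lt.1 fun h => hx ⟨hx0, h⟩), one_div]

lemma tendsto_lintegral_ofReal_inv_max_one_div_succ (hμ : ∀ᵐ x ∂μ, 0 < x) :
    Tendsto (fun k : ℕ => ∫⁻ x, ENNReal.ofReal (max x (1 / ((k : ℝ) + 1)))⁻¹ ∂μ) atTop
      (𝓝 (∫⁻ x, ENNReal.ofReal (1 / x) ∂μ)) := by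
  refine lintegral_tendsto_of_tendsto_of_monotone
    (fun k => by fun_prop) ?_ ?_
  · filter_upwards [hμ] with x hx k m hkm
    refine ENNReal.ofReal_le_ofReal (inv_anti₀ (hx.trans_le (le_max_left _ _)) ?_)
    exact max_le_max le_rfl (Nat.one_div_le_one_div hkm)
  · filter_upwards [hμ] with x hx
    refine tendsto_const_nhds.congr' ?_
    filter_upwards [tendsto_one_div_add_atTop_nhds_zero_nat.eventually (gt_mem_nhds hx)]
      with k hk
    rw [max_eq_left hk.le, one_div]

end Truncation

section Limits

variable {π : ℕ → Measure ℝ} {πlim : Measure ℝ} [∀ n, IsFiniteMeasure (π n)]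
  [IsFiniteMeasure πlim]

lemma lintegral_ofReal_inv_le_liminf (hπ : ∀ n, ∀ᵐ x ∂π n, 0 < x) (hπlim : ∀ᵐ x ∂πlim, 0 < x)
    (hnarrow : ∀ f : ℝ →ᵇ ℝ, Tendsto (fun n => ∫ x, f x ∂π n) atTop (𝓝 (∫ x, f x ∂πlim))) :
    ∫⁻ x, ENNReal.ofReal (1 / x) ∂πlim
      ≤ liminf (fun n => ∫⁻ x, ENNReal.ofReal (1 / x) ∂π n) atTop := by
  refine le_of_tendsto' (tendsto_lintegral_ofReal_inv_max_one_div_succ hπlim) fun k => ?_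
  rw [← (tendsto_lintegral_ofReal_inv_max hnarrow Nat.one_div_pos_of_nat).liminf_eq]
  exact liminf_le_liminf (.of_forall fun n => lintegral_ofReal_inv_max_le (hπ n) _)

lemma limsup_lintegral_ofReal_inv_le (hπlim : ∀ᵐ x ∂πlim, 0 < x)
    (hnarrow : ∀ f : ℝ →ᵇ ℝ, Tendsto (fun n => ∫ x, f x ∂π n) atTop (𝓝 (∫ x, f x ∂πlim)))
    {C : ℝ} (hC : ∀ n, ∫⁻ τ, ENNReal.ofReal (1 / τ) ∂π n ≤ ENNReal.ofReal C)
    (htight : ∀ ε : ℝ, 0 < ε → ∃ δ : ℝ, 0 < δ ∧ ∀ n,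
      (π n).withDensity (fun τ => ENNReal.ofReal (1 / τ)) (Ioo 0 δ)
        ≤ ENNReal.ofReal ε * ∫⁻ τ, ENNReal.ofReal (1 / τ) ∂π n) :
    limsup (fun n => ∫⁻ x, ENNReal.ofReal (1 / x) ∂π n) atTop
      ≤ ∫⁻ x, ENNReal.ofReal (1 / x) ∂πlim := by
  set F := fun n => ∫⁻ x, ENNReal.ofReal (1 / x) ∂π n
  set Fl := ∫⁻ x, ENNReal.ofReal (1 / x) ∂πlim
  have hε : ∀ ε > 0, limsup F atTop ≤ Fl + ENNReal.ofReal (ε * C) := by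
    intro ε hε
    obtain ⟨δ, hδ, hsmall⟩ := htight ε hε
    have hF : ∀ n, F n ≤ ∫⁻ x, ENNReal.ofReal (max x δ)⁻¹ ∂π n + ENNReal.ofReal (ε * C) :=
      fun n => calc
        F n ≤ ∫⁻ x, ENNReal.ofReal (max x δ)⁻¹ ∂π n
            + (π n).withDensity (fun τ => ENNReal.ofReal (1 / τ)) (Ioo 0 δ) :=
          lintegral_ofReal_inv_le_add_withDensity_Ioo δ
        _ ≤ ∫⁻ x, ENNReal.ofReal (max x δ)⁻¹ ∂π n + ENNReal.ofReal ε * ENNReal.ofReal C := by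
          gcongr
          exact (hsmall n).trans (by gcongr; exact hC n)
        _ = _ := by rw [ENNReal.ofReal_mul hε.le]
    calc limsup F atTop
        ≤ limsup (fun n => ∫⁻ x, ENNReal.ofReal (max x δ)⁻¹ ∂π n + ENNReal.ofReal (ε * C))
            atTop := limsup_le_limsup (.of_forall hF)
      _ = ∫⁻ x, ENNReal.ofReal (max x δ)⁻¹ ∂πlim + ENNReal.ofReal (ε * C) :=
          ((tendsto_lintegral_ofReal_inv_max hnarrow hδ).add tendsto_const_nhds).limsup_eq
      _ ≤ Fl + ENNReal.ofReal (ε * C) := by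
          gcongr
          exact lintegral_ofReal_inv_max_le hπlim δ
  have hlim : Tendsto (fun ε : ℝ => Fl + ENNReal.ofReal (ε * C)) (𝓝[>] 0) (𝓝 Fl) := by
    have : Continuous fun ε : ℝ => Fl + ENNReal.ofReal (ε * C) :=
      continuous_const.add (ENNReal.continuous_ofReal.comp (continuous_id.mul continuous_const))
    simpa using (this.tendsto 0).mono_left nhdsWithin_le_nhds
  exact ge_of_tendsto hlim (eventually_nhdsWithin_of_forall hε)

end Limits

/-- If `π_n → π` narrowly, `sup_n ∫(1/τ)dπ_n < ∞`, and the size-biased normalized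
measures `π̃_n(dτ) = (1/τ)π_n(dτ)/∫(1/s)π_n(ds)` are uniformly tight in `]0,+∞[`
(no mass near `0` nor near `+∞`, uniformly in `n`), then
`∫(1/τ)dπ_n → ∫(1/τ)dπ < +∞`. -/
theorem stmt7 (π : ℕ → Measure ℝ) (πlim : Measure ℝ)
    (hp : ∀ n, IsProbabilityMeasure (π n)) [IsProbabilityMeasure πlim]
    (hs : ∀ n, π n (Set.Ioi (0:ℝ))ᶜ = 0) (hsl : πlim (Set.Ioi (0:ℝ))ᶜ = 0)
    (hnarrow : ∀ f : ℝ →ᵇ ℝ,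
      Tendsto (fun n => ∫ x, f x ∂π n) atTop (nhds (∫ x, f x ∂πlim)))
    (C : ℝ) (hC : ∀ n, ∫⁻ τ, ENNReal.ofReal (1 / τ) ∂π n ≤ ENNReal.ofReal C)
    (htight : ∀ ε : ℝ, 0 < ε → ∃ δ M : ℝ, 0 < δ ∧ 0 < M ∧ ∀ n,
      (π n).withDensity (fun τ => ENNReal.ofReal (1 / τ)) (Set.Ioo 0 δ)
        + (π n).withDensity (fun τ => ENNReal.ofReal (1 / τ)) (Set.Ioi M)
        < ENNReal.ofReal ε * ∫⁻ τ, ENNReal.ofReal (1 / τ) ∂π n) :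
    Tendsto (fun n => ∫⁻ τ, ENNReal.ofReal (1 / τ) ∂π n) atTop
        (nhds (∫⁻ τ, ENNReal.ofReal (1 / τ) ∂πlim)) ∧
      ∫⁻ τ, ENNReal.ofReal (1 / τ) ∂πlim < ⊤ := by
  have hπ : ∀ n, ∀ᵐ x ∂π n, 0 < x := fun n => mem_ae_iff.2 (hs n)
  have hπlim : ∀ᵐ x ∂πlim, 0 < x := mem_ae_iff.2 hsl
  have hlow := lintegral_ofReal_inv_le_liminf hπ hπlim hnarrow
  have hup := limsup_lintegral_ofReal_inv_le hπlim hnarrow hC fun ε hε => by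
    obtain ⟨δ, M, hδ, -, hsmall⟩ := htight ε hε
    exact ⟨δ, hδ, fun n => le_self_add.trans (hsmall n).le⟩
  refine ⟨tendsto_of_le_liminf_of_limsup_le hlow hup, ?_⟩
  exact hlow.trans_lt
    ((liminf_le_of_frequently_le' (.of_forall hC)).trans_lt ENNReal.ofReal_lt_top)
end

section
/- Let μ ∈ P(E×[0,+∞]) and Q : E×E → [0,+∞[ with Σ_y Q(x₀,y) > μ(x₀, 1/τ) := ∫(1/τ) μ(x₀,dτ) for some x₀ ∈ E. Then for every M > 0, choosing h_{x₀}(τ) = −M/τ (and h ≡ 0, H ≡ 0 elsewhere), the tilted functional satisfies I_{h,H}(μ,Q) ≥ M·(Σ_y Q(x₀,y) − μ(x₀,1/τ)), and hence sup over admissible (h,H) of I_{h,H}(μ,Q) = +∞. -/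
/-! With `H = 0` the transition part of the functional vanishes because `p` is stochastic.
With `h_{x₀}(s) = -M/s` the integrand `e^{s h_{x₀}(s)}` is the constant `e^{-M}` on the support
of `ψ_{x₀}`, so the functional equals `M (Σ_y Q(x₀,y) - μ(x₀,1/τ))` exactly, which is unbounded
in `M` once the gap is positive. -/

open MeasureTheory Filter Set Finset

noncomputable def tiltedFunctional {E : Type*} [Fintype E] (p : E → E → ℝ) (ψ μ : E → Measure ℝ)
    (Q : E → E → ℝ) (h : E → ℝ → ℝ) (H : E → E → ℝ) : ℝ :=
  (∑ x, ∑ y, Q x y * (H x y - Real.log (∑ z, p x z * Real.exp (H x z))))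
    + ∑ x, ((∫ s, h x s ∂μ x) - ∑ y, Q x y * Real.log (∫ s, Real.exp (s * h x s) ∂ψ x))

theorem EReal.iSup_coe_eq_top_of_not_bddAbove {ι : Sort*} {f : ι → ℝ}
    (hf : ¬BddAbove (range f)) : ⨆ i, (f i : EReal) = ⊤ := by
  refine iSup_eq_top.mpr fun b hb => ?_
  obtain ⟨c, hbc, -⟩ := EReal.lt_iff_exists_real_btwn.mp hb
  obtain ⟨_, ⟨i, rfl⟩, hci⟩ := not_bddAbove_iff.mp hf c
  exact ⟨i, hbc.trans (EReal.coe_lt_coe_iff.mpr hci)⟩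

theorem integral_exp_mul_neg_div {ψ : Measure ℝ} [IsProbabilityMeasure ψ]
    (hψ : ∀ᵐ s ∂ψ, s ≠ 0) (M : ℝ) : ∫ s, Real.exp (s * (-M / s)) ∂ψ = Real.exp (-M) := by
  rw [integral_congr_ae (g := fun _ => Real.exp (-M))
    (hψ.mono fun s hs => by simp only [mul_div_cancel₀ _ hs])]
  simp

namespace tiltedFunctional

variable {E : Type*} [Fintype E] {p : E → E → ℝ} {ψ μ : E → Measure ℝ} {Q : E → E → ℝ}

theorem zero_right (hp : ∀ x, ∑ y, p x y = 1) (h : E → ℝ → ℝ) :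
    tiltedFunctional p ψ μ Q h 0 =
      ∑ x, ((∫ s, h x s ∂μ x) - ∑ y, Q x y * Real.log (∫ s, Real.exp (s * h x s) ∂ψ x)) := by
  simp [tiltedFunctional, hp]

theorem reciprocal_tilt [DecidableEq E] [∀ x, IsProbabilityMeasure (ψ x)]
    (hp : ∀ x, ∑ y, p x y = 1) {x₀ : E} (hψ : ∀ᵐ s ∂ψ x₀, s ≠ 0) (M : ℝ) :
    tiltedFunctional p ψ μ Q (fun x s => if x = x₀ then -M / s else 0) 0 =
      M * ((∑ y, Q x₀ y) - ∫ s, 1 / s ∂μ x₀) := by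
  rw [zero_right hp, Finset.sum_eq_single_of_mem x₀ (Finset.mem_univ x₀)
    fun x _ hx => by simp [hx]]
  simp only [if_true, integral_exp_mul_neg_div hψ, Real.log_exp, ← Finset.sum_mul]
  simp_rw [div_eq_mul_one_div (-M), integral_const_mul]
  ring

end tiltedFunctional

theorem stmt18_general (E : Type*) [Fintype E] [DecidableEq E]
    (p : E → E → ℝ) (hp1 : ∀ x, ∑ y, p x y = 1)
    (ψ : E → Measure ℝ) (hψ : ∀ x, IsProbabilityMeasure (ψ x))
    (hψs : ∀ x, ψ x (Set.Ioi (0:ℝ))ᶜ = 0)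
    (μ : E → Measure ℝ)
    (Q : E → E → ℝ)
    (I : (E → ℝ → ℝ) → (E → E → ℝ) → ℝ)
    (hI : ∀ h H, I h H =
      (∑ x, ∑ y, Q x y * (H x y - Real.log (∑ z, p x z * Real.exp (H x z))))
        + ∑ x, ((∫ s, h x s ∂μ x)
            - ∑ y, Q x y * Real.log (∫ s, Real.exp (s * h x s) ∂ψ x)))
    (x₀ : E)
    (hgap : ∫ s, 1 / s ∂μ x₀ < ∑ y, Q x₀ y) :
    (∀ M : ℝ, 0 < M →
      M * ((∑ y, Q x₀ y) - ∫ s, 1 / s ∂μ x₀) ≤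
        I (fun x s => if x = x₀ then -M / s else 0) 0) ∧
    (⨆ h : E → ℝ → ℝ, ⨆ H : E → E → ℝ, ((I h H : ℝ) : EReal)) = ⊤ := by
  obtain rfl : I = tiltedFunctional p ψ μ Q := funext₂ hI
  have hψ₀ : ∀ᵐ s ∂ψ x₀, s ≠ 0 := by
    filter_upwards [mem_ae_iff.mpr (hψs x₀)] with s hs using ne_of_gt hs
  have key := tiltedFunctional.reciprocal_tilt (μ := μ) (Q := Q) hp1 hψ₀
  set g := (∑ y, Q x₀ y) - ∫ s, 1 / s ∂μ x₀
  have hg : 0 < g := sub_pos.mpr hgap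
  refine ⟨fun M _ => (key M).ge, ?_⟩
  refine eq_top_mono (iSup_mono fun h => le_iSup (fun H => _) 0) ?_
  refine EReal.iSup_coe_eq_top_of_not_bddAbove (not_bddAbove_iff.mpr fun c => ?_)
  refine ⟨_, mem_range_self fun x s => if x = x₀ then -((c + 1) / g) / s else 0, ?_⟩
  rw [key, div_mul_cancel₀ _ hg.ne']
  linarith

/-- If `Σ_y Q(x₀,y) > μ(x₀,1/τ)` for some `x₀`, then taking
`h_{x₀}(τ) = -M/τ` (and `h ≡ 0`, `H ≡ 0` elsewhere) in the tilted functional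
`I_{h,H}(μ,Q) = Σ_{x,y} Q(x,y)(H(x,y) - log Σ_z p(x,z)e^{H(x,z)})
 + Σ_x (∫ μ(x,dτ) h_x(τ) - Σ_y Q(x,y) log ∫ ψ_x(ds) e^{s h_x(s)})`
gives `I_{h,H}(μ,Q) ≥ M (Σ_y Q(x₀,y) - μ(x₀,1/τ))`, and hence
`sup_{h,H} I_{h,H}(μ,Q) = +∞`. -/
theorem stmt18 (E : Type*) [Fintype E] [DecidableEq E]
    (p : E → E → ℝ) (hp0 : ∀ x y, 0 ≤ p x y) (hp1 : ∀ x, ∑ y, p x y = 1)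
    (ψ : E → Measure ℝ) (hψ : ∀ x, IsProbabilityMeasure (ψ x))
    (hψs : ∀ x, ψ x (Set.Ioi (0:ℝ))ᶜ = 0)
    (μ : E → Measure ℝ) (hμ : ∀ x, IsFiniteMeasure (μ x))
    (hμs : ∀ x, μ x (Set.Ioi (0:ℝ))ᶜ = 0)
    (Q : E → E → ℝ) (hQ0 : ∀ x y, 0 ≤ Q x y)
    (I : (E → ℝ → ℝ) → (E → E → ℝ) → ℝ)
    (hI : ∀ h H, I h H =
      (∑ x, ∑ y, Q x y * (H x y - Real.log (∑ z, p x z * Real.exp (H x z))))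
        + ∑ x, ((∫ s, h x s ∂μ x)
            - ∑ y, Q x y * Real.log (∫ s, Real.exp (s * h x s) ∂ψ x)))
    (x₀ : E) (hint : Integrable (fun s => 1 / s) (μ x₀))
    (hgap : ∫ s, 1 / s ∂μ x₀ < ∑ y, Q x₀ y) :
    (∀ M : ℝ, 0 < M →
      M * ((∑ y, Q x₀ y) - ∫ s, 1 / s ∂μ x₀) ≤
        I (fun x s => if x = x₀ then -M / s else 0) 0) ∧
    (⨆ h : E → ℝ → ℝ, ⨆ H : E → E → ℝ, ((I h H : ℝ) : EReal)) = ⊤ :=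
  stmt18_general E p hp1 ψ hψ hψs μ Q I hI x₀ hgap
end

section
/- Let P, Q be probability measures on a measurable space and V an event with Q(V) > 0 and Q absolutely continuous with respect to P. Then log P(V) ≥ −(H(Q|P) + e^{−1})/Q(V) + log Q(V), where H(Q|P) = ∫ log(dQ/dP) dQ is the relative entropy. -/
/-!
Split `H(Q|P) = ∫ llr Q P ∂Q` along `V` and `Vᶜ`. On each piece Gibbs' inequality for the
restricted measures gives `∫_A llr Q P ∂Q ≥ Q(A) log (Q(A) / P(A))`. On `V` this is the main
term; on `Vᶜ` it is at least `-e⁻¹ P(Vᶜ) ≥ -e⁻¹`, because `t log t ≥ -e⁻¹`.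
-/

open Real in
lemma Real.neg_exp_neg_one_le_mul_log {t : ℝ} (ht : 0 ≤ t) : -exp (-1) ≤ t * log t := by
  rcases ht.eq_or_lt with rfl | ht
  · simpa using exp_nonneg (-1)
  · have := mul_exp_neg_le_exp_neg_one (-log t)
    rw [neg_neg, exp_log ht] at this
    linarith

open Real in
lemma Real.neg_exp_neg_one_mul_le_mul_log_div {x y : ℝ} (hx : 0 ≤ x) (hy : 0 ≤ y) :
    -exp (-1) * y ≤ x * log (x / y) := by
  rcases hy.eq_or_lt with rfl | hy
  · simp
  · calc -exp (-1) * y ≤ (x / y * log (x / y)) * y := by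
          gcongr
          exact neg_exp_neg_one_le_mul_log (by positivity)
      _ = x * log (x / y) := by field_simp

namespace MeasureTheory

variable {α : Type*} [MeasurableSpace α] {μ ν : Measure α} {s : Set α}

lemma Measure.rnDeriv_restrict_restrict [SigmaFinite μ] [SigmaFinite ν] (hμν : μ ≪ ν)
    (hs : MeasurableSet s) :
    (μ.restrict s).rnDeriv (ν.restrict s) =ᵐ[ν.restrict s] μ.rnDeriv ν := by
  have h : μ.restrict s = (ν.restrict s).withDensity (μ.rnDeriv ν) := by
    rw [← restrict_withDensity hs, Measure.withDensity_rnDeriv_eq μ ν hμν]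
  rw [h]
  exact Measure.rnDeriv_withDensity _ (Measure.measurable_rnDeriv μ ν)

lemma llr_restrict_ae_eq [SigmaFinite μ] [SigmaFinite ν] (hμν : μ ≪ ν)
    (hs : MeasurableSet s) :
    llr (μ.restrict s) (ν.restrict s) =ᵐ[μ.restrict s] llr μ ν :=
  (hμν.restrict s).ae_le <| (Measure.rnDeriv_restrict_restrict hμν hs).fun_comp
    fun x ↦ Real.log x.toReal

variable [IsFiniteMeasure μ] [IsFiniteMeasure ν]

lemma mul_log_le_setIntegral_llr (hμν : μ ≪ ν) (hs : MeasurableSet s)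
    (h_int : IntegrableOn (llr μ ν) s μ) :
    μ.real s * Real.log (μ.real s / ν.real s) ≤ ∫ x in s, llr μ ν x ∂μ := by
  have hllr := llr_restrict_ae_eq hμν hs
  have h_int' : Integrable (llr (μ.restrict s) (ν.restrict s)) (μ.restrict s) :=
    h_int.congr hllr.symm
  have gibbs := InformationTheory.mul_log_le_toReal_klDiv (hμν.restrict s) h_int'
  rw [InformationTheory.toReal_klDiv (hμν.restrict s) h_int', integral_congr_ae hllr] at gibbs
  simp only [measureReal_restrict_apply_univ] at gibbs
  linarith

lemma mul_log_le_integral_llr_add_exp_neg_one [IsProbabilityMeasure ν] (hμν : μ ≪ ν)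
    (hs : MeasurableSet s) (h_int : Integrable (llr μ ν) μ) :
    μ.real s * Real.log (μ.real s / ν.real s) ≤ ∫ x, llr μ ν x ∂μ + Real.exp (-1) := by
  have h_compl : -Real.exp (-1) ≤ ∫ x in sᶜ, llr μ ν x ∂μ :=
    calc -Real.exp (-1) ≤ -Real.exp (-1) * ν.real sᶜ := by
          nlinarith [Real.exp_pos (-1), measureReal_le_one (μ := ν) (s := sᶜ)]
      _ ≤ μ.real sᶜ * Real.log (μ.real sᶜ / ν.real sᶜ) :=
          Real.neg_exp_neg_one_mul_le_mul_log_div measureReal_nonneg measureReal_nonneg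
      _ ≤ ∫ x in sᶜ, llr μ ν x ∂μ :=
          mul_log_le_setIntegral_llr hμν hs.compl h_int.integrableOn
  rw [← integral_add_compl hs h_int]
  linarith [mul_log_le_setIntegral_llr hμν hs h_int.integrableOn]

end MeasureTheory

open MeasureTheory

/-- Entropy inequality for large-deviation lower bounds: if `Q ≪ P` are
probability measures, `V` is an event with `Q(V) > 0`, and
`H(Q|P) = ∫ log(dQ/dP) dQ` is the relative entropy, then
`log P(V) ≥ -(H(Q|P) + e⁻¹)/Q(V) + log Q(V)`. -/
theorem stmt19 {α : Type*} [MeasurableSpace α] (P Q : Measure α)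
    [IsProbabilityMeasure P] [IsProbabilityMeasure Q] (hac : Q ≪ P)
    (V : Set α) (hV : MeasurableSet V) (hQV : Q V ≠ 0)
    (hint : Integrable (fun ω => Real.log ((Q.rnDeriv P ω).toReal)) Q) :
    Real.log ((P V).toReal) ≥
      -((∫ ω, Real.log ((Q.rnDeriv P ω).toReal) ∂Q) + Real.exp (-1)) / (Q V).toReal
        + Real.log ((Q V).toReal) := by
  have hq : 0 < Q.real V := ENNReal.toReal_pos hQV (measure_ne_top Q V)
  have hp : 0 < P.real V := ENNReal.toReal_pos (fun h ↦ hQV (hac h)) (measure_ne_top P V)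
  have key := mul_log_le_integral_llr_add_exp_neg_one hac hV hint
  rw [Real.log_div hq.ne' hp.ne'] at key
  change Real.log (P.real V) ≥
    -((∫ ω, llr Q P ω ∂Q) + Real.exp (-1)) / Q.real V + Real.log (Q.real V)
  rw [neg_div]
  linarith [(le_div_iff₀' hq).2 key]
end
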